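/- arXiv:2207.11654 — 2 statements merged into one kernel-verified Lean document; each statement's English description precedes it below -/
import Mathlib

section
/- A matching produced by the deferred-acceptance procedure admits no blocking pair: there do not exist a medical center C and a miner M such that C is matched to some miner M' ≠ M and C strictly prefers M to M' while M strictly prefers C to (one of) its matched center(s). Formally, for the Gale–Shapley stable matching between two finite sets with strict linear preference orders, the output matching is stable. -/
/-! Deferred acceptance (Gale–Shapley) between medical centers (proposers) and miners
(acceptors), each with strict preferences given by injective rank functions
(lower rank = more preferred). We implement the algorithm and state that its output
matching admits no blocking pair. -/

/-- State of the deferred-acceptance procedure: the current (tentative) partial matching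
of proposers to acceptors, and the set of acceptors each proposer has already proposed
to. -/
structure GSState (n s : ℕ) where
  matched : Fin n → Option (Fin s)
  proposed : Fin n → Finset (Fin s)

/-- The proposer currently (tentatively) held by acceptor `a`, if any. -/
def gsHolder {n s : ℕ} (st : GSState n s) (a : Fin s) : Option (Fin n) :=
  (List.finRange n).find? (fun q => decide (st.matched q = some a))

/-- One step of deferred acceptance: some unmatched proposer with remaining candidates
proposes to its most-preferred acceptor not yet proposed to; the acceptor tentatively
keeps its favorite of its current holder and the new proposer and rejects the other. -/
def gsStep {n s : ℕ} (prefP : Fin n → Fin s → ℕ) (prefA : Fin s → Fin n → ℕ)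
    (st : GSState n s) : GSState n s :=
  let cands := fun p => (List.finRange s).filter (fun a => decide (a ∉ st.proposed p))
  match (List.finRange n).find?
      (fun p => decide (st.matched p = none) && !(cands p).isEmpty) with
  | none => st
  | some p =>
    match (cands p).argmin (prefP p) with
    | none => st
    | some a =>
      let st' : GSState n s :=
        { matched := st.matched,
          proposed := fun q => if q = p then insert a (st.proposed q) else st.proposed q }
      match gsHolder st a with
      | none => { st' with matched := Function.update st'.matched p (some a) }
      | some q =>
        if prefA a p < prefA a q then
          { st' with matched := fun r => if r = p then some a
                                         else if r = q then none else st.matched r }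
        else st'

/-- Iterate the deferred-acceptance step. -/
def gsRun {n s : ℕ} (prefP : Fin n → Fin s → ℕ) (prefA : Fin s → Fin n → ℕ) :
    ℕ → GSState n s → GSState n s
  | 0, st => st
  | k + 1, st => gsRun prefP prefA k (gsStep prefP prefA st)

/-- The matching output by the Gale–Shapley deferred-acceptance algorithm
(at most `n·s` proposals are ever made, so `n·s + 1` steps suffice). -/
def galeShapley (n s : ℕ) (prefP : Fin n → Fin s → ℕ) (prefA : Fin s → Fin n → ℕ) :
    Fin n → Option (Fin s) :=
  (gsRun prefP prefA (n * s + 1) ⟨fun _ => none, fun _ => ∅⟩).matched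

/-- `(p, a)` is a blocking pair for the partial matching `μ`: they are not matched
together, `p` is unmatched or strictly prefers `a` to its current miner, and `a` is
unmatched or strictly prefers `p` to its current center. -/
def BlockingPair {n s : ℕ} (prefP : Fin n → Fin s → ℕ) (prefA : Fin s → Fin n → ℕ)
    (μ : Fin n → Option (Fin s)) (p : Fin n) (a : Fin s) : Prop :=
  μ p ≠ some a ∧
    (μ p = none ∨ ∃ b, μ p = some b ∧ prefP p a < prefP p b) ∧
    ((∀ q, μ q ≠ some a) ∨ ∃ q, μ q = some a ∧ prefA a p < prefA a q)

/-! Deferred acceptance maintains four facts: the tentative matching is injective; every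
acceptor that has received a proposal holds a proposer it ranks at least as high as each
of its proposers; a proposer's partner is one of the acceptors it has proposed to; and each
proposer proposes in order of preference. Every step adds a proposal, so after `n * s`
steps no unmatched proposer has an acceptor left. A blocking pair `(p, a)` then contradicts
the invariant: if `p` proposed to `a`, then `a` holds someone it ranks at least as high as
`p`; otherwise `p` is matched to an acceptor it ranks at least as high as `a`. -/

namespace GSState

variable {n s : ℕ}

def proposeTo (st : GSState n s) (p : Fin n) (a : Fin s) : Fin n → Finset (Fin s) :=
  fun q => if q = p then insert a (st.proposed q) else st.proposed q

def acceptMatching (st : GSState n s) (p : Fin n) (a : Fin s) : Fin n → Option (Fin s) :=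
  fun r => if r = p then some a else if st.matched r = some a then none else st.matched r

theorem mem_proposeTo {st : GSState n s} {p r : Fin n} {a b : Fin s} :
    b ∈ st.proposeTo p a r ↔ (r = p ∧ b = a) ∨ b ∈ st.proposed r := by
  by_cases hr : r = p <;> simp [proposeTo, hr]

theorem acceptMatching_eq_some {st : GSState n s} {p r : Fin n} {a b : Fin s} :
    st.acceptMatching p a r = some b ↔
      (r = p ∧ b = a) ∨ (r ≠ p ∧ st.matched r = some b ∧ b ≠ a) := by
  unfold acceptMatching
  split_ifs <;> grind

def IsTerminal (st : GSState n s) : Prop :=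
  ∀ p, st.matched p = none → ∀ a, a ∈ st.proposed p

def numProposals (st : GSState n s) : ℕ := ∑ p, (st.proposed p).card

end GSState

section Step

variable {n s : ℕ} (prefP : Fin n → Fin s → ℕ) (prefA : Fin s → Fin n → ℕ)

theorem gsHolder_eq_some {st : GSState n s} {a : Fin s} {q : Fin n}
    (h : gsHolder st a = some q) : st.matched q = some a := by
  simpa using List.find?_some h

theorem gsHolder_eq_none {st : GSState n s} {a : Fin s}
    (h : gsHolder st a = none) (q : Fin n) : st.matched q ≠ some a := by
  simpa using List.find?_eq_none.mp h q (List.mem_finRange q)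

theorem gsStep_cases (st : GSState n s)
    (hinj : ∀ a p q, st.matched p = some a → st.matched q = some a → p = q) :
    (st.IsTerminal ∧ gsStep prefP prefA st = st) ∨
    ∃ p a, st.matched p = none ∧ a ∉ st.proposed p ∧
      (∀ b ∉ st.proposed p, prefP p a ≤ prefP p b) ∧
      ((gsStep prefP prefA st = ⟨st.acceptMatching p a, st.proposeTo p a⟩ ∧
          ∀ q, st.matched q = some a → prefA a p ≤ prefA a q) ∨
        (gsStep prefP prefA st = ⟨st.matched, st.proposeTo p a⟩ ∧
          ∃ q, st.matched q = some a ∧ prefA a q ≤ prefA a p)) := by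
  unfold gsStep
  dsimp only
  cases hfind : (List.finRange n).find? (fun p => decide (st.matched p = none) &&
      !((List.finRange s).filter (fun a => decide (a ∉ st.proposed p))).isEmpty) with
  | none =>
    refine .inl ⟨fun p hp a => ?_, rfl⟩
    have := List.find?_eq_none.mp hfind p (List.mem_finRange p)
    by_contra ha
    simp_all [List.filter_eq_nil_iff]
  | some p =>
    dsimp only
    right
    obtain ⟨hp, hcands⟩ : st.matched p = none ∧
        (List.finRange s).filter (fun a => decide (a ∉ st.proposed p)) ≠ [] := by
      simpa using List.find?_some hfind
    cases hmin : ((List.finRange s).filter (fun a => decide (a ∉ st.proposed p))).argmin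
        (prefP p) with
    | none => exact absurd (List.argmin_eq_none.mp hmin) hcands
    | some a =>
      refine ⟨p, a, hp, by simpa using (List.mem_filter.mp (List.argmin_mem hmin)).2,
        fun b hb => List.le_of_mem_argmin (by simpa using hb) hmin, ?_⟩
      dsimp only
      cases hhold : gsHolder st a with
      | none =>
        refine .inl ⟨?_, fun q hq => absurd hq (gsHolder_eq_none hhold q)⟩
        dsimp only
        congr 1
        funext r
        simp [GSState.acceptMatching, Function.update_apply, gsHolder_eq_none hhold r]
      | some q =>
        have hq := gsHolder_eq_some hhold
        dsimp only
        split_ifs with hpq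
        · refine .inl ⟨?_, fun q' hq' => (hinj a q' q hq' hq) ▸ hpq.le⟩
          congr 1
          funext r
          have : st.matched r = some a ↔ r = q := ⟨(hinj a r q · hq), (· ▸ hq)⟩
          simp [GSState.acceptMatching, this]
        · exact .inr ⟨rfl, q, hq, not_lt.mp hpq⟩

end Step

section Invariant

variable {n s : ℕ} (prefP : Fin n → Fin s → ℕ) (prefA : Fin s → Fin n → ℕ)

structure GSInvariant (st : GSState n s) : Prop where
  matched_inj : ∀ a p q, st.matched p = some a → st.matched q = some a → p = q
  exists_holder_le : ∀ p a, a ∈ st.proposed p →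
    ∃ q, st.matched q = some a ∧ prefA a q ≤ prefA a p
  mem_proposed_of_matched : ∀ p a, st.matched p = some a → a ∈ st.proposed p
  le_of_mem_proposed : ∀ p a b, a ∈ st.proposed p → b ∉ st.proposed p → prefP p a ≤ prefP p b

variable {prefP prefA}

theorem gsInvariant_init : GSInvariant prefP prefA (⟨fun _ => none, fun _ => ∅⟩ : GSState n s) :=
  ⟨by simp, by simp, by simp, by simp⟩

namespace GSInvariant

variable {st : GSState n s} {p : Fin n} {a : Fin s}

theorem le_of_mem_proposeTo (h : GSInvariant prefP prefA st)
    (ha : ∀ b ∉ st.proposed p, prefP p a ≤ prefP p b) {r : Fin n} {b c : Fin s}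
    (hb : b ∈ st.proposeTo p a r) (hc : c ∉ st.proposeTo p a r) : prefP r b ≤ prefP r c := by
  rw [GSState.mem_proposeTo, not_or] at *
  obtain ⟨rfl, rfl⟩ | hb := hb
  · exact ha c hc.2
  · exact h.le_of_mem_proposed r b c hb hc.2

theorem accept (h : GSInvariant prefP prefA st) (hp : st.matched p = none)
    (ha : ∀ b ∉ st.proposed p, prefP p a ≤ prefP p b)
    (hbetter : ∀ q, st.matched q = some a → prefA a p ≤ prefA a q) :
    GSInvariant prefP prefA ⟨st.acceptMatching p a, st.proposeTo p a⟩ where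
  matched_inj b x y hx hy := by
    simp only [GSState.acceptMatching_eq_some] at hx hy
    obtain ⟨rfl, rfl⟩ | ⟨-, hx, hba⟩ := hx <;> obtain ⟨rfl, hb⟩ | ⟨-, hy, hba'⟩ := hy
    · rfl
    · exact absurd rfl hba'
    · exact absurd hb hba
    · exact h.matched_inj b x y hx hy
  exists_holder_le r b hb := by
    rw [GSState.mem_proposeTo] at hb
    by_cases hba : b = a
    · subst hba
      refine ⟨p, by simp [GSState.acceptMatching], ?_⟩
      obtain ⟨rfl, -⟩ | hb := hb
      · exact le_rfl
      · obtain ⟨q, hq, hqr⟩ := h.exists_holder_le r b hb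
        exact (hbetter q hq).trans hqr
    · obtain ⟨q, hq, hqr⟩ := h.exists_holder_le r b (hb.resolve_left (hba ·.2))
      have hqp : q ≠ p := by
        rintro rfl
        simp [hp] at hq
      exact ⟨q, GSState.acceptMatching_eq_some.mpr (.inr ⟨hqp, hq, hba⟩), hqr⟩
  mem_proposed_of_matched r b hrb := by
    simp only [GSState.acceptMatching_eq_some] at hrb
    rw [GSState.mem_proposeTo]
    obtain ⟨rfl, rfl⟩ | ⟨-, hrb, -⟩ := hrb
    · exact .inl ⟨rfl, rfl⟩
    · exact .inr (h.mem_proposed_of_matched r b hrb)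
  le_of_mem_proposed _ _ _ := h.le_of_mem_proposeTo ha

theorem reject (h : GSInvariant prefP prefA st)
    (ha : ∀ b ∉ st.proposed p, prefP p a ≤ prefP p b) {q : Fin n}
    (hq : st.matched q = some a) (hqp : prefA a q ≤ prefA a p) :
    GSInvariant prefP prefA ⟨st.matched, st.proposeTo p a⟩ where
  matched_inj := h.matched_inj
  exists_holder_le r b hb := by
    rw [GSState.mem_proposeTo] at hb
    obtain ⟨rfl, rfl⟩ | hb := hb
    · exact ⟨q, hq, hqp⟩
    · exact h.exists_holder_le r b hb
  mem_proposed_of_matched r b hrb :=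
    GSState.mem_proposeTo.mpr (.inr (h.mem_proposed_of_matched r b hrb))
  le_of_mem_proposed _ _ _ := h.le_of_mem_proposeTo ha

end GSInvariant

end Invariant

section Run

variable {n s : ℕ} {prefP : Fin n → Fin s → ℕ} {prefA : Fin s → Fin n → ℕ} {st : GSState n s}

theorem GSInvariant.step (h : GSInvariant prefP prefA st) :
    GSInvariant prefP prefA (gsStep prefP prefA st) := by
  rcases gsStep_cases prefP prefA st h.matched_inj with
    ⟨-, hstep⟩ | ⟨p, a, hp, -, ha, ⟨hstep, hbetter⟩ | ⟨hstep, q, hq, hqp⟩⟩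
  · rwa [hstep]
  · rw [hstep]
    exact h.accept hp ha hbetter
  · rw [hstep]
    exact h.reject ha hq hqp

theorem GSInvariant.run (h : GSInvariant prefP prefA st) (k : ℕ) :
    GSInvariant prefP prefA (gsRun prefP prefA k st) := by
  induction k generalizing st with
  | zero => exact h
  | succ k ih => exact ih h.step

theorem gsRun_eq_self (hst : gsStep prefP prefA st = st) (k : ℕ) :
    gsRun prefP prefA k st = st := by
  induction k with
  | zero => rfl
  | succ k ih => rw [gsRun, hst, ih]

namespace GSState

theorem numProposals_le (st : GSState n s) : st.numProposals ≤ n * s :=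
  calc st.numProposals ≤ ∑ _p : Fin n, s :=
        Finset.sum_le_sum fun p _ => by simpa using (st.proposed p).card_le_univ
    _ = n * s := by simp

theorem numProposals_lt_proposeTo {p : Fin n} {a : Fin s} (ha : a ∉ st.proposed p)
    (m : Fin n → Option (Fin s)) :
    st.numProposals < (⟨m, st.proposeTo p a⟩ : GSState n s).numProposals := by
  refine Finset.sum_lt_sum (fun q _ => ?_) ⟨p, Finset.mem_univ p, ?_⟩
  · exact Finset.card_le_card fun b hb => mem_proposeTo.mpr (.inr hb)
  · simp [proposeTo, Finset.card_insert_of_notMem ha]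

end GSState

theorem gsStep_eq_self_or_numProposals_lt
    (hinj : ∀ a p q, st.matched p = some a → st.matched q = some a → p = q) :
    (st.IsTerminal ∧ gsStep prefP prefA st = st) ∨
      st.numProposals < (gsStep prefP prefA st).numProposals := by
  rcases gsStep_cases prefP prefA st hinj with
    hterm | ⟨p, a, -, ha, -, ⟨hstep, -⟩ | ⟨hstep, -⟩⟩
  · exact .inl hterm
  all_goals
    rw [hstep]
    exact .inr (GSState.numProposals_lt_proposeTo ha _)

theorem GSInvariant.isTerminal_run (h : GSInvariant prefP prefA st) (k : ℕ)
    (hk : n * s < st.numProposals + k) : (gsRun prefP prefA k st).IsTerminal := by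
  induction k generalizing st with
  | zero => exact absurd hk (by simpa using st.numProposals_le)
  | succ k ih =>
    rw [gsRun]
    rcases gsStep_eq_self_or_numProposals_lt h.matched_inj with ⟨hterm, hstep⟩ | hlt
    · rwa [hstep, gsRun_eq_self hstep]
    · exact ih h.step (by omega)

theorem GSInvariant.not_blockingPair (h : GSInvariant prefP prefA st) (hterm : st.IsTerminal)
    (p : Fin n) (a : Fin s) : ¬ BlockingPair prefP prefA st.matched p a := by
  rintro ⟨-, hp, ha⟩
  by_cases hpa : a ∈ st.proposed p
  · obtain ⟨q, hq, hqp⟩ := h.exists_holder_le p a hpa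
    rcases ha with hfree | ⟨q', hq', hpq'⟩
    · exact hfree q hq
    · obtain rfl := h.matched_inj a q' q hq' hq
      omega
  · rcases hp with hp | ⟨b, hb, hab⟩
    · exact hpa (hterm p hp a)
    · have hba := h.le_of_mem_proposed p b a (h.mem_proposed_of_matched p b hb) hpa
      omega

end Run

theorem galeShapley_stable_general (n s : ℕ)
    (prefP : Fin n → Fin s → ℕ) (prefA : Fin s → Fin n → ℕ) :
    ∀ p a, ¬ BlockingPair prefP prefA (galeShapley n s prefP prefA) p a := by
  have hinit : GSInvariant prefP prefA (⟨fun _ => none, fun _ => ∅⟩ : GSState n s) :=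
    gsInvariant_init
  exact (hinit.run _).not_blockingPair
    (hinit.isTerminal_run (n * s + 1) (by simp [GSState.numProposals]))

/-- The matching produced by deferred acceptance admits no blocking pair: there is no
center–miner pair that would both strictly prefer each other over their assignments. -/
theorem galeShapley_stable (n s : ℕ)
    (prefP : Fin n → Fin s → ℕ) (prefA : Fin s → Fin n → ℕ)
    (hP : ∀ p, Function.Injective (prefP p))
    (hA : ∀ a, Function.Injective (prefA a)) :
    ∀ p a, ¬ BlockingPair prefP prefA (galeShapley n s prefP prefA) p a :=
  galeShapley_stable_general n s prefP prefA
end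

section
/- In a one-to-one deferred-acceptance setting with n proposers and n acceptors each holding strict preferences, a stable matching always exists (the Gale–Shapley algorithm terminates with a matching that has no blocking pair). -/
/-!
Run deferred acceptance, recording the set `R` of pairs `(p, a)` such that `a` has rejected `p`.
Each proposer proposes to their favourite acceptor who has not rejected them, and the state is
kept *justified*: whoever rejected `p` currently holds a proposal she prefers to `p`. As each
proposer makes a single proposal, a proposer rejected by everyone would give an injection of the
acceptors into the remaining proposers, so everybody can propose. If the proposals are pairwise
distinct they form a stable matching; otherwise some acceptor receives two proposals and rejects
the worse one, which enlarges `R` while keeping it justified.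
-/

section DeferredAcceptance

variable {α β : Type*} (prefP : α → β → ℕ) (prefA : β → α → ℕ)

def IsStable (μ : α ≃ β) : Prop :=
  ∀ p a, ¬ (prefP p a < prefP p (μ p) ∧ prefA a p < prefA a (μ.symm a))

def IsProposal (R : Finset (α × β)) (p : α) (a : β) : Prop :=
  (p, a) ∉ R ∧ ∀ b, (p, b) ∉ R → prefP p a ≤ prefP p b

def RejectionsJustified (R : Finset (α × β)) : Prop :=
  ∀ p a, (p, a) ∈ R → ∃ q, IsProposal prefP R q a ∧ prefA a q < prefA a p

variable {prefP prefA}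

theorem IsProposal.eq_of_injective (hP : ∀ p, Function.Injective (prefP p))
    {R : Finset (α × β)} {p : α} {a b : β}
    (ha : IsProposal prefP R p a) (hb : IsProposal prefP R p b) : a = b :=
  hP p (le_antisymm (ha.2 b hb.1) (hb.2 a ha.1))

theorem isProposal_insert_of_ne [DecidableEq α] [DecidableEq β] {R : Finset (α × β)}
    {r s : α} {a b : β} (hs : s ≠ r) :
    IsProposal prefP (insert (r, a) R) s b ↔ IsProposal prefP R s b := by
  simp [IsProposal, hs]

theorem RejectionsJustified.reject [DecidableEq α] [DecidableEq β]
    (hP : ∀ p, Function.Injective (prefP p)) {R : Finset (α × β)}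
    (hR : RejectionsJustified prefP prefA R) {q r : α} {a : β}
    (hq : IsProposal prefP R q a) (hr : IsProposal prefP R r a)
    (hlt : prefA a q < prefA a r) : RejectionsJustified prefP prefA (insert (r, a) R) := by
  have hqr : q ≠ r := by rintro rfl; exact hlt.false
  have hq' : IsProposal prefP (insert (r, a) R) q a := (isProposal_insert_of_ne hqr).2 hq
  intro p b hpb
  rcases Finset.mem_insert.mp hpb with hnew | hold
  · obtain ⟨rfl, rfl⟩ := Prod.mk.inj hnew
    exact ⟨q, hq', hlt⟩
  obtain ⟨s, hs, hsp⟩ := hR p b hold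
  by_cases hsr : s = r
  · -- `r` proposed to `b`, so `b = a`, and `a` now holds `q`'s proposal, which she likes better.
    subst hsr
    obtain rfl := hs.eq_of_injective hP hr
    exact ⟨q, hq', hlt.trans hsp⟩
  · exact ⟨s, (isProposal_insert_of_ne hsr).2 hs, hsp⟩

theorem RejectionsJustified.isStable_ofBijective (hP : ∀ p, Function.Injective (prefP p))
    {R : Finset (α × β)} (hR : RejectionsJustified prefP prefA R) {f : α → β}
    (hf : ∀ p, IsProposal prefP R p (f p)) (hbij : Function.Bijective f) :
    IsStable prefP prefA (Equiv.ofBijective f hbij) := by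
  rintro p a ⟨hpa, hap⟩
  have hrej : (p, a) ∈ R := by
    by_contra hfree
    exact hpa.not_ge ((hf p).2 a hfree)
  obtain ⟨q, hq, hqp⟩ := hR p a hrej
  have hμ : (Equiv.ofBijective f hbij).symm a = q := by
    rw [Equiv.symm_apply_eq]
    exact ((hf q).eq_of_injective hP hq).symm
  rw [hμ] at hap
  exact lt_asymm hqp hap

variable [Fintype α] [Fintype β]

theorem RejectionsJustified.exists_isProposal (hP : ∀ p, Function.Injective (prefP p))
    (hcard : Fintype.card α = Fintype.card β) {R : Finset (α × β)}
    (hR : RejectionsJustified prefP prefA R) (p : α) : ∃ a, IsProposal prefP R p a := by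
  classical
  have hfree : (Finset.univ.filter fun b => (p, b) ∉ R).Nonempty := by
    by_contra hnone
    have hall : ∀ b, (p, b) ∈ R := by simpa [Finset.filter_eq_empty_iff] using hnone
    choose g hg _ using fun b => hR p b (hall b)
    have hg_inj : Function.Injective g := fun b b' h =>
      (hg b).eq_of_injective hP (h ▸ hg b')
    have hg_bij := (Fintype.bijective_iff_injective_and_card g).mpr ⟨hg_inj, hcard.symm⟩
    obtain ⟨b, rfl⟩ := hg_bij.2 p
    exact (hg b).1 (hall b)
  obtain ⟨a, ha, hmin⟩ := Finset.exists_min_image _ (prefP p) hfree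
  exact ⟨a, (Finset.mem_filter.mp ha).2, fun b hb => hmin b (by simpa using hb)⟩

theorem RejectionsJustified.exists_isStable [DecidableEq α] [DecidableEq β]
    (hP : ∀ p, Function.Injective (prefP p)) (hA : ∀ a, Function.Injective (prefA a))
    (hcard : Fintype.card α = Fintype.card β) {R : Finset (α × β)}
    (hR : RejectionsJustified prefP prefA R) : ∃ μ : α ≃ β, IsStable prefP prefA μ := by
  choose f hf using hR.exists_isProposal hP hcard
  by_cases hinj : Function.Injective f
  · have hbij := (Fintype.bijective_iff_injective_and_card f).mpr ⟨hinj, hcard⟩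
    exact ⟨_, hR.isStable_ofBijective hP hf hbij⟩
  obtain ⟨p₁, p₂, hf₁₂, hne⟩ := Function.not_injective_iff.mp hinj
  have hrejects : ∃ q r, IsProposal prefP R q (f r) ∧ prefA (f r) q < prefA (f r) r := by
    rcases (hA (f p₁)).ne hne |>.lt_or_gt with hlt | hgt
    · exact ⟨p₁, p₂, hf₁₂ ▸ hf p₁, hf₁₂ ▸ hlt⟩
    · exact ⟨p₂, p₁, hf₁₂ ▸ hf p₂, hgt⟩
  obtain ⟨q, r, hq, hlt⟩ := hrejects
  have hfresh : (r, f r) ∉ R := (hf r).1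
  exact (hR.reject hP hq (hf r) hlt).exists_isStable hP hA hcard
termination_by Rᶜ.card
decreasing_by
  rw [Finset.compl_insert]
  exact Finset.card_erase_lt_of_mem (Finset.mem_compl.mpr hfresh)

end DeferredAcceptance

/-- Classical stable marriage: with `n` proposers and `n` acceptors, each holding strict
preferences (injective rank functions, lower rank = more preferred), a stable matching
(a bijection admitting no blocking pair) always exists. A blocking pair `(p, a)` for
the bijection `μ` is a pair with `p` preferring `a` to `μ p` and `a` preferring `p` to
`μ⁻¹ a`. -/
theorem stable_matching_exists (n : ℕ)
    (prefP : Fin n → Fin n → ℕ) (prefA : Fin n → Fin n → ℕ)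
    (hP : ∀ p, Function.Injective (prefP p))
    (hA : ∀ a, Function.Injective (prefA a)) :
    ∃ μ : Fin n ≃ Fin n, ∀ p a : Fin n,
      ¬ (prefP p a < prefP p (μ p) ∧ prefA a p < prefA a (μ.symm a)) :=
  RejectionsJustified.exists_isStable (R := ∅) hP hA rfl (by simp [RejectionsJustified])
end
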